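/- arXiv:1810.11932 — 6 statements merged into one kernel-verified Lean document; each statement's English description precedes it below -/
import Mathlib

section
/- Let A, B ∈ ℍ² with D = d(A,B), let u ∈ T_A ℍ² and v ∈ T_B ℍ², set A_t = exp_A(t u), B_t = exp_B(t v), and F(t) = cosh(d(A_t, B_t)) − 1. Let α (resp. β) be the oriented angle between the geodesic from A to B and the vector u (resp. v). Then F'(0) = −sinh(D)(‖u‖ cos α − ‖v‖ cos β) and F''(0) = cosh(D)(‖u‖² + ‖v‖² − 2‖u‖‖v‖ cos α cos β) − 2‖u‖‖v‖ sin α sin β. -/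
noncomputable section

/-- The Minkowski bilinear form on `ℝ^{n,1}`. -/
def mink (n : ℕ) (x y : Fin (n+1) → ℝ) : ℝ :=
  (∑ i : Fin n, x i.castSucc * y i.castSucc) - x (Fin.last n) * y (Fin.last n)

/-- Membership in the hyperboloid model of hyperbolic `n`-space. -/
def IsHyp (n : ℕ) (x : Fin (n+1) → ℝ) : Prop :=
  mink n x x = -1 ∧ 0 < x (Fin.last n)

/-- Tangency to the hyperboloid at `x`. -/
def IsTang (n : ℕ) (x v : Fin (n+1) → ℝ) : Prop := mink n x v = 0

/-- Inverse hyperbolic cosine. -/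
def acosh (x : ℝ) : ℝ := Real.log (x + Real.sqrt (x ^ 2 - 1))

/-- Hyperbolic distance in the hyperboloid model: `cosh (dist x y) = -⟨x,y⟩`. -/
def hdist (n : ℕ) (x y : Fin (n+1) → ℝ) : ℝ := acosh (-(mink n x y))

/-- Norm of a tangent vector (the Minkowski form is positive definite on tangent spaces). -/
def tnorm (n : ℕ) (v : Fin (n+1) → ℝ) : ℝ := Real.sqrt (mink n v v)

/-- The Riemannian exponential map of the hyperboloid. -/
def hexp (n : ℕ) (x v : Fin (n+1) → ℝ) : Fin (n+1) → ℝ :=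
  Real.cosh (tnorm n v) • x + (Real.sinh (tnorm n v) / tnorm n v) • v

/-- Unit tangent vector at `x` pointing towards `y`. -/
def hdir (n : ℕ) (x y : Fin (n+1) → ℝ) : Fin (n+1) → ℝ :=
  (Real.sinh (hdist n x y))⁻¹ • (y + (mink n x y) • x)

/-- The inverse exponential map `exp_x⁻¹ (y)`. -/
def hlog (n : ℕ) (x y : Fin (n+1) → ℝ) : Fin (n+1) → ℝ :=
  hdist n x y • hdir n x y

/-- Parallel transport from `T_y ℍⁿ` to `T_x ℍⁿ` along the geodesic from `y` to `x`. -/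
def ptrans (n : ℕ) (x y v : Fin (n+1) → ℝ) : Fin (n+1) → ℝ :=
  v + ((mink n x v) / (1 - mink n x y)) • (x + y)

/-- Minkowski volume form on `ℝ^{2,1}`; `det3 x u w = ‖u‖‖w‖ sin θ` for tangent
vectors `u, w` at `x ∈ ℍ²`, where `θ` is the oriented angle from `u` to `w`. -/
def det3 (a b c : Fin 3 → ℝ) : ℝ :=
  a 0 * (b 1 * c 2 - b 2 * c 1) - a 1 * (b 0 * c 2 - b 2 * c 0)
    + a 2 * (b 0 * c 1 - b 1 * c 0)

/-- `sinhc x = sinh x / x`, with `sinhc 0 = 1`. -/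
def sinhc (x : ℝ) : ℝ := if x = 0 then 1 else Real.sinh x / x

/-!
In the hyperboloid model `cosh d(x, y) = -⟨x, y⟩`, and the geodesic from `x` with initial velocity
`u` is `t ↦ cosh (t‖u‖) x + sinh (t‖u‖) u / ‖u‖`, a path with `γ'' = ‖u‖² γ`. So near `t = 0`,
`F(t) + 1 = -⟨A_t, B_t⟩`, and the product rule gives `F'(0) = -(⟨u, B⟩ + ⟨A, v⟩)` and
`F''(0) = -(‖u‖² + ‖v‖²)⟨A, B⟩ - 2⟨u, v⟩`. The angles enter through
`⟨u, B⟩ = sinh D ‖u‖ cos α`, `det(A, B, u) = sinh D ‖u‖ sin α` and their analogues at `B`, and the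
product of the sines is resolved by the Gram identity
`det(A, B, u) det(A, B, v) = sinh² D ⟨u, v⟩ + cosh D ⟨u, B⟩⟨A, v⟩`.
-/

open Real Topology

section Minkowski

variable {n : ℕ}

theorem mink_comm (x y : Fin (n+1) → ℝ) : mink n x y = mink n y x := by
  simp only [mink, mul_comm]

theorem mink_add_left (x y z : Fin (n+1) → ℝ) :
    mink n (x + y) z = mink n x z + mink n y z := by
  simp only [mink, Pi.add_apply, add_mul, Finset.sum_add_distrib]
  ring

theorem mink_smul_left (c : ℝ) (x y : Fin (n+1) → ℝ) : mink n (c • x) y = c * mink n x y := by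
  simp only [mink, Pi.smul_apply, smul_eq_mul, mul_assoc, ← Finset.mul_sum]
  ring

theorem mink_smul_right (c : ℝ) (x y : Fin (n+1) → ℝ) : mink n x (c • y) = c * mink n x y := by
  rw [mink_comm, mink_smul_left, mink_comm]

theorem mink_sub_left (x y z : Fin (n+1) → ℝ) :
    mink n (x - y) z = mink n x z - mink n y z := by
  simp only [mink, Pi.sub_apply, sub_mul, Finset.sum_sub_distrib]
  ring

theorem HasDerivAt.mink {γ δ : ℝ → Fin (n+1) → ℝ} {γ' δ' : Fin (n+1) → ℝ} {t : ℝ}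
    (hγ : HasDerivAt γ γ' t) (hδ : HasDerivAt δ δ' t) :
    HasDerivAt (fun s => mink n (γ s) (δ s)) (mink n γ' (δ t) + mink n (γ t) δ') t := by
  have hprod (i : Fin (n+1)) : HasDerivAt (fun s => γ s i * δ s i)
      (γ' i * δ t i + γ t i * δ' i) t :=
    (hasDerivAt_pi.1 hγ i).mul (hasDerivAt_pi.1 hδ i)
  refine ((HasDerivAt.fun_sum (u := Finset.univ) fun (i : Fin n) _ => hprod i.castSucc).fun_sub
    (hprod (Fin.last n))).congr_deriv ?_
  simp only [_root_.mink, Finset.sum_add_distrib]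
  ring

end Minkowski

section Hyperboloid

variable {n : ℕ} {x y w : Fin (n+1) → ℝ}

theorem sum_sq_le_mink_self_mul_sq (hx : mink n x x = -1) (hw : IsTang n x w) :
    ∑ i : Fin n, w i.castSucc ^ 2 ≤ mink n w w * x (Fin.last n) ^ 2 := by
  have hCS := Finset.sum_mul_sq_le_sq_mul_sq Finset.univ (fun i : Fin n => x i.castSucc)
    (fun i => w i.castSucc)
  simp only [IsTang, mink, ← sq] at hx hw ⊢
  linear_combination hCS + (∑ i : Fin n, w i.castSucc ^ 2) * hx
    - (∑ i : Fin n, x i.castSucc * w i.castSucc + x (Fin.last n) * w (Fin.last n)) * hw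

theorem one_le_sq_last (hx : mink n x x = -1) : 1 ≤ x (Fin.last n) ^ 2 := by
  have : 0 ≤ ∑ i : Fin n, x i.castSucc * x i.castSucc :=
    Finset.sum_nonneg fun i _ => mul_self_nonneg _
  simp only [mink] at hx
  nlinarith

theorem mink_self_nonneg_of_isTang (hx : mink n x x = -1) (hw : IsTang n x w) :
    0 ≤ mink n w w := by
  have hT : 0 ≤ ∑ i : Fin n, w i.castSucc ^ 2 := Finset.sum_nonneg fun i _ => sq_nonneg _
  nlinarith [sum_sq_le_mink_self_mul_sq hx hw, one_le_sq_last hx]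

theorem eq_zero_of_isTang_of_mink_self_eq_zero (hx : mink n x x = -1) (hw : IsTang n x w)
    (h0 : mink n w w = 0) : w = 0 := by
  have hT := sum_sq_le_mink_self_mul_sq hx hw
  rw [h0, zero_mul] at hT
  have hsum : ∑ i : Fin n, w i.castSucc ^ 2 = 0 :=
    hT.antisymm (Finset.sum_nonneg fun i _ => sq_nonneg _)
  have hspace (i : Fin n) : w i.castSucc = 0 := by
    simpa using (Finset.sum_eq_zero_iff_of_nonneg fun i _ => sq_nonneg _).1 hsum i
      (Finset.mem_univ i)
  have hlast : w (Fin.last n) = 0 := by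
    simp only [mink, hspace, mul_zero, Finset.sum_const_zero, zero_sub, neg_eq_zero,
      mul_self_eq_zero] at h0
    exact h0
  funext i
  induction i using Fin.lastCases with
  | last => exact hlast
  | cast i => exact hspace i

theorem one_le_neg_mink (hx : IsHyp n x) (hy : IsHyp n y) : 1 ≤ -mink n x y := by
  obtain ⟨hxx, hxl⟩ := hx
  obtain ⟨hyy, hyl⟩ := hy
  have hCS := Finset.sum_mul_sq_le_sq_mul_sq Finset.univ
    (Fin.cons 1 fun i : Fin n => x i.castSucc : Fin (n+1) → ℝ)
    (Fin.cons 1 fun i : Fin n => y i.castSucc : Fin (n+1) → ℝ)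
  simp only [Fin.sum_univ_succ, Fin.cons_zero, Fin.cons_succ, one_pow, mul_one] at hCS
  simp only [mink, ← sq] at hxx hyy ⊢
  nlinarith [mul_pos hxl hyl]

theorem one_lt_neg_mink (hx : IsHyp n x) (hy : IsHyp n y) (hxy : x ≠ y) :
    1 < -mink n x y := by
  refine (one_le_neg_mink hx hy).lt_of_ne fun h => hxy (sub_eq_zero.1 ?_)
  have hyx : mink n y x = mink n x y := mink_comm y x
  apply eq_zero_of_isTang_of_mink_self_eq_zero hx.1
  · rw [IsTang, mink_comm, mink_sub_left, hx.1, hyx]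
    linarith
  · rw [mink_sub_left, mink_comm x, mink_comm y, mink_sub_left, mink_sub_left, hx.1, hy.1, hyx]
    linarith

end Hyperboloid

section Distance

variable {n : ℕ} {x y w : Fin (n+1) → ℝ}

theorem hdist_comm (x y : Fin (n+1) → ℝ) : hdist n x y = hdist n y x := by
  rw [hdist, hdist, mink_comm]

theorem cosh_hdist (hx : IsHyp n x) (hy : IsHyp n y) : cosh (hdist n x y) = -mink n x y :=
  Real.cosh_arcosh (one_le_neg_mink hx hy)

theorem sinh_hdist_pos (hx : IsHyp n x) (hy : IsHyp n y) (hxy : x ≠ y) :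
    0 < sinh (hdist n x y) :=
  Real.sinh_pos_iff.2 (Real.arcosh_pos (one_lt_neg_mink hx hy hxy))

theorem mink_hdir_of_isTang (y : Fin (n+1) → ℝ) (hw : IsTang n x w) :
    mink n (hdir n x y) w = mink n y w / sinh (hdist n x y) := by
  rw [IsTang] at hw
  rw [hdir, mink_smul_left, mink_add_left, mink_smul_left, hw]
  ring

end Distance

theorem mink_two (x y : Fin 3 → ℝ) : mink 2 x y = x 0 * y 0 + x 1 * y 1 - x 2 * y 2 := by
  simp [mink, Fin.sum_univ_two, show Fin.last 2 = 2 from rfl]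

theorem det3_swap (x y w : Fin 3 → ℝ) : det3 y x w = -det3 x y w := by
  simp only [det3]
  ring

theorem det3_hdir (x y w : Fin 3 → ℝ) :
    det3 x (hdir 2 x y) w = det3 x y w / sinh (hdist 2 x y) := by
  simp only [det3, hdir, Pi.smul_apply, Pi.add_apply, smul_eq_mul]
  ring

-- The Minkowski form has determinant `-1`, hence the sign.
theorem det3_mul_det3 (x y u v : Fin 3 → ℝ) :
    det3 x y u * det3 x y v
      = -(mink 2 x x * (mink 2 y y * mink 2 u v - mink 2 y v * mink 2 u y)
          - mink 2 x y * (mink 2 y x * mink 2 u v - mink 2 y v * mink 2 u x)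
          + mink 2 x v * (mink 2 y x * mink 2 u y - mink 2 y y * mink 2 u x)) := by
  simp only [det3, mink_two]
  ring

theorem det3_mul_det3_of_isTang {x y u v : Fin 3 → ℝ} (hx : mink 2 x x = -1)
    (hy : mink 2 y y = -1) (hu : IsTang 2 x u) (hv : IsTang 2 y v) :
    det3 x y u * det3 x y v
      = (mink 2 x y ^ 2 - 1) * mink 2 u v - mink 2 x y * mink 2 u y * mink 2 x v := by
  rw [IsTang] at hu hv
  rw [det3_mul_det3, mink_comm y x, mink_comm u x, hx, hy, hu, hv]
  ring

section CoshSinhPath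

variable {E : Type*} [NormedAddCommGroup E] [NormedSpace ℝ E]

def coshSinhPath (a : ℝ) (p q : E) (t : ℝ) : E := cosh (t * a) • p + sinh (t * a) • q

@[simp]
theorem coshSinhPath_zero (a : ℝ) (p q : E) : coshSinhPath a p q 0 = p := by
  simp [coshSinhPath]

theorem hasDerivAt_coshSinhPath (a : ℝ) (p q : E) (t : ℝ) :
    HasDerivAt (coshSinhPath a p q) (a • coshSinhPath a q p t) t := by
  have hc := ((hasDerivAt_id t).mul_const a).cosh.smul_const p
  have hs := ((hasDerivAt_id t).mul_const a).sinh.smul_const q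
  refine (hc.fun_add hs).congr_deriv ?_
  simp only [coshSinhPath, id, one_mul, smul_add, smul_smul, mul_comm a]
  exact add_comm _ _

end CoshSinhPath

section Geodesics

variable {n : ℕ} {x u : Fin (n+1) → ℝ}

theorem tnorm_smul (t : ℝ) (v : Fin (n+1) → ℝ) : tnorm n (t • v) = |t| * tnorm n v := by
  rw [tnorm, tnorm, mink_smul_left, mink_smul_right, ← mul_assoc, ← sq,
    Real.sqrt_mul (sq_nonneg t), Real.sqrt_sq_eq_abs]

theorem hexp_smul (x v : Fin (n+1) → ℝ) (t : ℝ) :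
    hexp n x (t • v) = coshSinhPath (tnorm n v) x ((tnorm n v)⁻¹ • v) t := by
  set a := tnorm n v
  have hsinh : sinh (|t| * a) / (|t| * a) * t = sinh (t * a) * a⁻¹ := by
    rcases eq_or_ne t 0 with rfl | ht
    · simp
    rcases abs_cases t with ⟨habs, -⟩ | ⟨habs, -⟩ <;>
      simp only [habs, neg_mul, Real.sinh_neg] <;> field_simp
  have hcosh : cosh (|t| * a) = cosh (t * a) := by
    rw [← Real.cosh_abs, abs_mul, abs_abs, ← abs_mul, Real.cosh_abs]
  rw [hexp, coshSinhPath, tnorm_smul, hcosh, smul_smul, hsinh, smul_smul]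

theorem tnorm_smul_inv_smul (hx : mink n x x = -1) (hu : IsTang n x u) :
    tnorm n u • (tnorm n u)⁻¹ • u = u := by
  rcases eq_or_ne (tnorm n u) 0 with h | h
  · rw [tnorm, Real.sqrt_eq_zero (mink_self_nonneg_of_isTang hx hu)] at h
    rw [eq_zero_of_isTang_of_mink_self_eq_zero hx hu h, smul_zero, smul_zero]
  · exact smul_inv_smul₀ h u

variable (a b : ℝ) (p q r w : Fin (n+1) → ℝ)

theorem hasDerivAt_mink_coshSinhPath (t : ℝ) :
    HasDerivAt (fun t => mink n (coshSinhPath a p q t) (coshSinhPath b r w t))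
      (a * mink n (coshSinhPath a q p t) (coshSinhPath b r w t)
        + b * mink n (coshSinhPath a p q t) (coshSinhPath b w r t)) t := by
  simpa only [mink_smul_left, mink_smul_right] using
    (hasDerivAt_coshSinhPath a p q t).mink (hasDerivAt_coshSinhPath b r w t)

theorem deriv_mink_coshSinhPath :
    deriv (fun t => mink n (coshSinhPath a p q t) (coshSinhPath b r w t))
      = fun t => a * mink n (coshSinhPath a q p t) (coshSinhPath b r w t)
        + b * mink n (coshSinhPath a p q t) (coshSinhPath b w r t) :=
  funext fun t => (hasDerivAt_mink_coshSinhPath a b p q r w t).deriv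

theorem deriv_mink_coshSinhPath_zero :
    deriv (fun t => mink n (coshSinhPath a p q t) (coshSinhPath b r w t)) 0
      = mink n (a • q) r + mink n p (b • w) := by
  simp [deriv_mink_coshSinhPath, mink_smul_left, mink_smul_right]

theorem deriv_deriv_mink_coshSinhPath_zero :
    deriv (deriv fun t => mink n (coshSinhPath a p q t) (coshSinhPath b r w t)) 0
      = (a ^ 2 + b ^ 2) * mink n p r + 2 * mink n (a • q) (b • w) := by
  rw [deriv_mink_coshSinhPath, (((hasDerivAt_mink_coshSinhPath a b q p r w 0).const_mul a).fun_add
    ((hasDerivAt_mink_coshSinhPath a b p q w r 0).const_mul b)).deriv]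
  simp only [coshSinhPath_zero, mink_smul_left, mink_smul_right]
  ring

end Geodesics

section Variation

variable {n : ℕ} {x y u v : Fin (n+1) → ℝ}

-- Only eventually: `cosh (acosh s) = s` needs `1 ≤ s`, obtained by continuity from `-⟨x, y⟩ > 1`.
theorem cosh_hdist_hexp_eventuallyEq (hx : IsHyp n x) (hy : IsHyp n y) (hxy : x ≠ y) :
    (fun t : ℝ => cosh (hdist n (hexp n x (t • u)) (hexp n y (t • v))))
      =ᶠ[𝓝 0] fun t => -mink n (coshSinhPath (tnorm n u) x ((tnorm n u)⁻¹ • u) t)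
        (coshSinhPath (tnorm n v) y ((tnorm n v)⁻¹ • v) t) := by
  have hcont := (hasDerivAt_mink_coshSinhPath (tnorm n u) (tnorm n v) x ((tnorm n u)⁻¹ • u)
    y ((tnorm n v)⁻¹ • v) 0).continuousAt.neg
  have h0 := one_lt_neg_mink hx hy hxy
  rw [← coshSinhPath_zero (tnorm n u) x ((tnorm n u)⁻¹ • u),
    ← coshSinhPath_zero (tnorm n v) y ((tnorm n v)⁻¹ • v)] at h0
  filter_upwards [hcont.eventually (eventually_gt_nhds h0)] with t ht
  rw [hdist, hexp_smul, hexp_smul]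
  exact Real.cosh_arcosh ht.le

theorem deriv_cosh_hdist_hexp_zero (hx : IsHyp n x) (hy : IsHyp n y) (hxy : x ≠ y)
    (hu : IsTang n x u) (hv : IsTang n y v) :
    deriv (fun t : ℝ => cosh (hdist n (hexp n x (t • u)) (hexp n y (t • v))) - 1) 0
        = -(mink n u y + mink n x v)
      ∧ deriv (deriv fun t : ℝ => cosh (hdist n (hexp n x (t • u)) (hexp n y (t • v))) - 1) 0
        = -((tnorm n u ^ 2 + tnorm n v ^ 2) * mink n x y + 2 * mink n u v) := by
  have hF := cosh_hdist_hexp_eventuallyEq (u := u) (v := v) hx hy hxy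
  simp only [deriv_sub_const_fun]
  rw [hF.deriv_eq, hF.deriv.deriv_eq]
  simp only [deriv.fun_neg', deriv_mink_coshSinhPath_zero, deriv_deriv_mink_coshSinhPath_zero,
    tnorm_smul_inv_smul hx.1 hu, tnorm_smul_inv_smul hy.1 hv, and_self]

end Variation

/-- first and second derivatives of `F(t) = cosh d(A_t, B_t) - 1`.
`α` is the oriented angle at `A` between the geodesic from `A` to `B` and `u`; `β` is the
oriented angle at `B` between the (continuation of the) geodesic `AB` and `v`. -/
theorem stmt2 (A B u v : Fin 3 → ℝ)
    (hA : IsHyp 2 A) (hB : IsHyp 2 B) (hAB : A ≠ B)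
    (hu : IsTang 2 A u) (hv : IsTang 2 B v)
    (α β : ℝ)
    (hαc : tnorm 2 u * Real.cos α = mink 2 (hdir 2 A B) u)
    (hαs : tnorm 2 u * Real.sin α = det3 A (hdir 2 A B) u)
    (hβc : tnorm 2 v * Real.cos β = -(mink 2 (hdir 2 B A) v))
    (hβs : tnorm 2 v * Real.sin β = -(det3 B (hdir 2 B A) v)) :
    deriv (fun t : ℝ =>
        Real.cosh (hdist 2 (hexp 2 A (t • u)) (hexp 2 B (t • v))) - 1) 0
      = -(Real.sinh (hdist 2 A B))
          * (tnorm 2 u * Real.cos α - tnorm 2 v * Real.cos β)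
    ∧ deriv (deriv (fun t : ℝ =>
        Real.cosh (hdist 2 (hexp 2 A (t • u)) (hexp 2 B (t • v))) - 1)) 0
      = Real.cosh (hdist 2 A B) * ((tnorm 2 u) ^ 2 + (tnorm 2 v) ^ 2
            - 2 * tnorm 2 u * tnorm 2 v * Real.cos α * Real.cos β)
        - 2 * tnorm 2 u * tnorm 2 v * Real.sin α * Real.sin β := by
  obtain ⟨hF', hF''⟩ := deriv_cosh_hdist_hexp_zero hA hB hAB hu hv
  have hs := (sinh_hdist_pos hA hB hAB).ne'
  have hs2 : sinh (hdist 2 A B) ^ 2 = mink 2 A B ^ 2 - 1 := by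
    rw [Real.sinh_sq, cosh_hdist hA hB, neg_sq]
  rw [mink_hdir_of_isTang B hu, eq_div_iff hs] at hαc
  rw [mink_hdir_of_isTang A hv, hdist_comm B A, ← neg_div, eq_div_iff hs] at hβc
  rw [det3_hdir, eq_div_iff hs] at hαs
  rw [det3_hdir, det3_swap, hdist_comm B A, neg_div, neg_neg, eq_div_iff hs] at hβs
  have hGram := det3_mul_det3_of_isTang hA.1 hB.1 hu hv
  rw [mink_comm u B] at hGram
  rw [hF', hF'', cosh_hdist hA hB, mink_comm u B]
  constructor
  · linear_combination hαc - hβc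
  · apply mul_left_cancel₀ (pow_ne_zero 2 hs)
    linear_combination (-2 * mink 2 A B * (tnorm 2 v * cos β * sinh (hdist 2 A B))) * hαc
      - 2 * mink 2 A B * mink 2 B u * hβc
      + 2 * (tnorm 2 v * sin β * sinh (hdist 2 A B)) * hαs + 2 * det3 A B u * hβs
      + 2 * hGram - 2 * mink 2 u v * hs2
end
end

section
/- With a = (‖u‖ cos α − ‖v‖ cos β)², b = ‖u‖² sin²α + ‖v‖² sin²β, c = (‖u‖ sin α − ‖v‖ sin β)², and D > 0, one has a + b·D·tanh(D/2) + c·(D coth D − D tanh(D/2)) ≥ a + c, where ‖u‖, ‖v‖ ≥ 0 and α, β are arbitrary real angles. -/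
lemma sinh_le_mul_cosh {x : ℝ} (hx : 0 ≤ x) : Real.sinh x ≤ x * Real.cosh x := by
  have hd : ∀ y : ℝ, HasDerivAt (fun t : ℝ => t * Real.cosh t - Real.sinh t)
      (1 * Real.cosh y + y * Real.sinh y - Real.cosh y) y := fun y =>
    ((hasDerivAt_id y).mul (Real.hasDerivAt_cosh y)).sub (Real.hasDerivAt_sinh y)
  have h : MonotoneOn (fun t : ℝ => t * Real.cosh t - Real.sinh t) (Set.Ici 0) := by
    apply monotoneOn_of_deriv_nonneg (convex_Ici 0)
    · exact ((continuous_id.mul Real.continuous_cosh).sub Real.continuous_sinh).continuousOn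
    · exact fun y _ => (hd y).differentiableAt.differentiableWithinAt
    · intro y hy
      rw [(hd y).deriv]
      have hy' : 0 < y := by simpa using hy
      nlinarith [Real.sinh_pos_iff.2 hy']
  have := h (Set.self_mem_Ici) (Set.mem_Ici.2 hx) hx
  simpa using this

/-- with `a = (‖u‖cos α - ‖v‖cos β)²`, `b = ‖u‖²sin²α + ‖v‖²sin²β`,
`c = (‖u‖sin α - ‖v‖sin β)²` and `D > 0`, one has
`a + b·D·tanh(D/2) + c·(D coth D - D tanh(D/2)) ≥ a + c`. -/
theorem stmt6 (nu nv α β D : ℝ) (hnu : 0 ≤ nu) (hnv : 0 ≤ nv) (hD : 0 < D) :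
    (nu * Real.cos α - nv * Real.cos β) ^ 2
      + (nu ^ 2 * (Real.sin α) ^ 2 + nv ^ 2 * (Real.sin β) ^ 2)
          * (D * Real.tanh (D / 2))
      + (nu * Real.sin α - nv * Real.sin β) ^ 2
          * (D * (Real.cosh D / Real.sinh D) - D * Real.tanh (D / 2))
    ≥ (nu * Real.cos α - nv * Real.cos β) ^ 2
      + (nu * Real.sin α - nv * Real.sin β) ^ 2 := by
  set s := Real.sinh (D / 2) with hs_def
  set c := Real.cosh (D / 2) with hc_def
  have hs : 0 < s := Real.sinh_pos_iff.2 (by linarith)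
  have hc : 0 < c := Real.cosh_pos _
  have hcs : c ^ 2 = 1 + s ^ 2 := Real.cosh_sq' _
  have hsc : s ≤ (D / 2) * c := sinh_le_mul_cosh (by linarith)
  have ht : Real.tanh (D / 2) = s / c := Real.tanh_eq_sinh_div_cosh _
  have hsD : Real.sinh D = 2 * s * c := by
    rw [show D = 2 * (D / 2) by ring, Real.sinh_two_mul]
  have hcD : Real.cosh D = 2 * c ^ 2 - 1 := by
    rw [show D = 2 * (D / 2) by ring, Real.cosh_two_mul, ← hc_def]
    nlinarith [Real.cosh_sq (D / 2)]
  rw [ht, hsD, hcD]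
  set b := nu ^ 2 * Real.sin α ^ 2 + nv ^ 2 * Real.sin β ^ 2 with hb_def
  set C := (nu * Real.sin α - nv * Real.sin β) ^ 2 with hC_def
  have h2b : C ≤ 2 * b := by
    have := sq_nonneg (nu * Real.sin α + nv * Real.sin β)
    nlinarith [sq_nonneg (nu * Real.sin α + nv * Real.sin β)]
  have hC : 0 ≤ C := sq_nonneg _
  have key : b * (D * (s / c)) + C * (D * ((2 * c ^ 2 - 1) / (2 * s * c)) - D * (s / c)) ≥ C := by
    have h1 : D * ((2 * c ^ 2 - 1) / (2 * s * c)) - D * (s / c) = D / (2 * s * c) := by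
      rw [hcs]; field_simp; ring
    have h2 : b * (D * (s / c)) + D / (2 * s * c) * C
        = (2 * b * D * s ^ 2 + C * D) / (2 * s * c) := by
      field_simp
    rw [h1, ge_iff_le, mul_comm C, h2, le_div_iff₀ (by positivity)]
    have e : C * D * c ^ 2 = C * D * (1 + s ^ 2) := by rw [hcs]
    nlinarith [mul_nonneg (mul_nonneg (by linarith : (0:ℝ) ≤ 2 * b - C) hD.le) (sq_nonneg s),
      mul_nonneg (mul_nonneg hC (by nlinarith : (0:ℝ) ≤ D * c - 2 * s)) hc.le, e]
  linarith
end

section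
/- Let (M,g) be a complete Riemannian manifold and F : M → ℝ a C² function such that α‖v‖² ≤ Hess F(v,v) ≤ β‖v‖² for all tangent vectors v, with 0 < α ≤ β. Then F has a unique minimizer x*, and for any fixed stepsize t ∈ (0, 1/β], the gradient descent sequence x_{k+1} = exp_{x_k}(−t grad F(x_k)) satisfies d(x_k, x*) ≤ c q^k, where c = sqrt((2/α)(F(x_0) − F(x*))) and q = sqrt(1 − (t/2)α(1 + α/β)). -/
/-!
Along every geodesic `F` lies between the quadratics with curvatures `α` and `β` through its
first-order expansion. The upper bound makes every gradient step decrease `F` by at least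
`(t/2)‖grad F‖²`; the lower bound, taken along minimizing geodesics, gives the
Polyak–Łojasiewicz inequality `F - inf F ≤ ‖grad F‖² / (2α)`. Together they make
`F(x_k) - inf F` decay like `(1 - tα)^k`, so the steps `t‖grad F(x_k)‖` decay geometrically
and `(x_k)` is Cauchy. Its limit attains `inf F` (upper bound from `x_k` to the limit), the
gradient vanishes there, and the lower bound at this critical point is the quadratic growth
`(α/2) d(y, x*)² ≤ F y - F x*`, which gives uniqueness and, since `1 - tα ≤ q²`, the rate.
-/

open scoped RealInnerProductSpace

/-- A packaging of the data of a complete Riemannian manifold `M` needed to state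
gradient-descent results: tangent spaces realized as subspaces of an ambient Hilbert
space `V` (as provided, e.g., by the Nash embedding theorem), an exponential map, and
the existence of minimizing geodesics (Hopf–Rinow). The curve `t ↦ exp x (t • v)`,
`v ∈ tangent x`, is the geodesic through `x` with velocity `v`, and the distance on `M`
is the Riemannian distance. -/
structure RiemannianData (M : Type*) (V : Type*) [MetricSpace M]
    [NormedAddCommGroup V] [InnerProductSpace ℝ V] where
  /-- the tangent space at each point -/
  tangent : M → Submodule ℝ V
  /-- the Riemannian exponential map -/
  exp : M → V → M
  exp_zero : ∀ x, exp x 0 = x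
  /-- geodesics emanating from a point do not increase distance faster than their speed -/
  dist_exp_le : ∀ x, ∀ v ∈ tangent x, dist x (exp x v) ≤ ‖v‖
  /-- Hopf–Rinow: any two points are joined by a minimizing geodesic -/
  minimizing : ∀ x y : M, ∃ v ∈ tangent x, exp x v = y ∧ ‖v‖ = dist x y ∧
    ∀ s t : ℝ, s ∈ Set.Icc (0:ℝ) 1 → t ∈ Set.Icc (0:ℝ) 1 →
      dist (exp x (s • v)) (exp x (t • v)) = |s - t| * ‖v‖

open Set Filter Topology

lemma ConvexOn.add_deriv_mul_sub_le {g : ℝ → ℝ} (hg : ConvexOn ℝ univ g) {a : ℝ}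
    (hd : DifferentiableAt ℝ g a) (b : ℝ) : g a + deriv g a * (b - a) ≤ g b := by
  rcases lt_trichotomy a b with hab | rfl | hab
  · have h := hg.deriv_le_slope (mem_univ a) (mem_univ b) hab hd
    rw [slope_def_field, le_div_iff₀ (sub_pos.2 hab)] at h
    linarith
  · simp
  · have h := hg.slope_le_deriv (mem_univ b) (mem_univ a) hab hd
    rw [slope_def_field, div_le_iff₀ (sub_pos.2 hab)] at h
    linarith

lemma add_deriv_mul_add_le_of_le_deriv_deriv {f : ℝ → ℝ} (hf : ContDiff ℝ 2 f) {m : ℝ}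
    (hm : ∀ s, m ≤ deriv (deriv f) s) (a b : ℝ) :
    f a + deriv f a * (b - a) + m / 2 * (b - a) ^ 2 ≤ f b := by
  have hf1 : Differentiable ℝ f := hf.differentiable (by norm_num)
  have hf2 : Differentiable ℝ (deriv f) := hf.differentiable_deriv_two
  set g : ℝ → ℝ := fun s => f s - m / 2 * (s - a) ^ 2
  have hg1 : ∀ s, HasDerivAt g (deriv f s - m * (s - a)) s := fun s => by
    refine ((hf1 s).hasDerivAt.sub
      ((((hasDerivAt_id' s).sub_const a).pow 2).const_mul (m / 2))).congr_deriv ?_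
    push_cast
    ring
  have hg' : deriv g = fun s => deriv f s - m * (s - a) := funext fun s => (hg1 s).deriv
  have hg2 : ∀ s, HasDerivAt (deriv g) (deriv (deriv f) s - m) s := fun s => by
    rw [hg']
    exact ((hf2 s).hasDerivAt.sub
      (((hasDerivAt_id' s).sub_const a).const_mul m)).congr_deriv (by rw [mul_one])
  have hconv : ConvexOn ℝ univ g :=
    convexOn_univ_of_deriv2_nonneg (fun s => (hg1 s).differentiableAt)
      (fun s => (hg2 s).differentiableAt) fun s => by
        simpa [(hg2 s).deriv] using hm s
  have h := hconv.add_deriv_mul_sub_le (hg1 a).differentiableAt b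
  simp only [g, hg', sub_self] at h
  linarith

lemma le_add_deriv_mul_add_of_deriv_deriv_le {f : ℝ → ℝ} (hf : ContDiff ℝ 2 f) {M : ℝ}
    (hM : ∀ s, deriv (deriv f) s ≤ M) (a b : ℝ) :
    f b ≤ f a + deriv f a * (b - a) + M / 2 * (b - a) ^ 2 := by
  have h := add_deriv_mul_add_le_of_le_deriv_deriv hf.neg (m := -M)
    (fun s => by simpa using hM s) a b
  rw [deriv.fun_neg] at h
  linarith

lemma le_sqrt_mul_sqrt_pow {a b c : ℝ} (ha : 0 ≤ a) (hb : 0 ≤ b) (hc : 0 ≤ c) (k : ℕ)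
    (h : a ^ 2 ≤ b * c ^ k) : a ≤ √b * √c ^ k := by
  rw [← pow_le_pow_iff_left₀ ha (by positivity) two_ne_zero]
  rwa [mul_pow, ← pow_mul, mul_comm k 2, pow_mul, Real.sq_sqrt hb, Real.sq_sqrt hc]

namespace RiemannianData

variable {M V : Type*} [MetricSpace M] [NormedAddCommGroup V] [InnerProductSpace ℝ V]

structure HasGradHessBounds (D : RiemannianData M V) (F : M → ℝ) (gradF : M → V) (α β : ℝ) :
    Prop where
  contDiff : ∀ x, ∀ v ∈ D.tangent x, ContDiff ℝ 2 (fun s : ℝ => F (D.exp x (s • v)))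
  grad_mem : ∀ x, gradF x ∈ D.tangent x
  deriv_eq_inner : ∀ x, ∀ v ∈ D.tangent x,
    deriv (fun s : ℝ => F (D.exp x (s • v))) 0 = ⟪gradF x, v⟫
  hess_bounds : ∀ x, ∀ v ∈ D.tangent x, ∀ s : ℝ,
    α * ‖v‖ ^ 2 ≤ deriv (deriv (fun s : ℝ => F (D.exp x (s • v)))) s ∧
      deriv (deriv (fun s : ℝ => F (D.exp x (s • v)))) s ≤ β * ‖v‖ ^ 2

def IsGradientDescent (D : RiemannianData M V) (gradF : M → V) (t : ℝ) (x : ℕ → M) : Prop :=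
  ∀ k, x (k + 1) = D.exp (x k) (-(t • gradF (x k)))

namespace HasGradHessBounds

variable {D : RiemannianData M V} {F : M → ℝ} {gradF : M → V} {α β : ℝ}

theorem quadratic_lower_bound (hF : D.HasGradHessBounds F gradF α β) {p : M} {v : V}
    (hv : v ∈ D.tangent p) : F p + ⟪gradF p, v⟫ + α / 2 * ‖v‖ ^ 2 ≤ F (D.exp p v) := by
  have h := add_deriv_mul_add_le_of_le_deriv_deriv (hF.contDiff p v hv)
    (fun s => (hF.hess_bounds p v hv s).1) 0 1
  simpa [hF.deriv_eq_inner p v hv, D.exp_zero, div_mul_eq_mul_div] using h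

theorem quadratic_upper_bound (hF : D.HasGradHessBounds F gradF α β) {p : M} {v : V}
    (hv : v ∈ D.tangent p) : F (D.exp p v) ≤ F p + ⟪gradF p, v⟫ + β / 2 * ‖v‖ ^ 2 := by
  have h := le_add_deriv_mul_add_of_deriv_deriv_le (hF.contDiff p v hv)
    (fun s => (hF.hess_bounds p v hv s).2) 0 1
  simpa [hF.deriv_eq_inner p v hv, D.exp_zero, div_mul_eq_mul_div] using h

theorem quadratic_lower_bound_dist (hF : D.HasGradHessBounds F gradF α β) (p y : M) :
    F p - ‖gradF p‖ * dist p y + α / 2 * dist p y ^ 2 ≤ F y := by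
  obtain ⟨v, hv, rfl, hnorm, -⟩ := D.minimizing p y
  have hinner := (abs_le.1 (abs_real_inner_le_norm (gradF p) v)).1
  rw [← hnorm]
  linarith [hF.quadratic_lower_bound hv]

theorem quadratic_upper_bound_dist (hF : D.HasGradHessBounds F gradF α β) (p y : M) :
    F y ≤ F p + ‖gradF p‖ * dist p y + β / 2 * dist p y ^ 2 := by
  obtain ⟨v, hv, rfl, hnorm, -⟩ := D.minimizing p y
  have hinner := (abs_le.1 (abs_real_inner_le_norm (gradF p) v)).2
  rw [← hnorm]
  linarith [hF.quadratic_upper_bound hv]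

theorem sub_le_sq_norm_grad_div (hF : D.HasGradHessBounds F gradF α β) (hα : 0 < α)
    (p y : M) : F p - F y ≤ ‖gradF p‖ ^ 2 / (2 * α) := by
  rw [le_div_iff₀ (by positivity)]
  nlinarith [hF.quadratic_lower_bound_dist p y, sq_nonneg (‖gradF p‖ - α * dist p y)]

theorem bddBelow_range (hF : D.HasGradHessBounds F gradF α β) (hα : 0 < α) :
    BddBelow (Set.range F) := by
  rcases isEmpty_or_nonempty M with hM | ⟨⟨p⟩⟩
  · simp [Set.range_eq_empty]
  · refine ⟨F p - ‖gradF p‖ ^ 2 / (2 * α), ?_⟩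
    rintro _ ⟨y, rfl⟩
    linarith [hF.sub_le_sq_norm_grad_div hα p y]

theorem sub_iInf_le_sq_norm_grad_div (hF : D.HasGradHessBounds F gradF α β) (hα : 0 < α)
    (p : M) : F p - ⨅ y, F y ≤ ‖gradF p‖ ^ 2 / (2 * α) := by
  have : Nonempty M := ⟨p⟩
  have : F p - ‖gradF p‖ ^ 2 / (2 * α) ≤ ⨅ y, F y :=
    le_ciInf fun y => by linarith [hF.sub_le_sq_norm_grad_div hα p y]
  linarith

theorem apply_exp_neg_smul_grad_le (hF : D.HasGradHessBounds F gradF α β) {t : ℝ}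
    (ht : 0 ≤ t) (htβ : t * β ≤ 1) (p : M) :
    F (D.exp p (-(t • gradF p))) ≤ F p - t / 2 * ‖gradF p‖ ^ 2 := by
  have h := hF.quadratic_upper_bound (neg_mem (Submodule.smul_mem _ t (hF.grad_mem p)))
  rw [inner_neg_right, real_inner_smul_right, real_inner_self_eq_norm_sq, norm_neg, norm_smul,
    Real.norm_of_nonneg ht] at h
  nlinarith [sq_nonneg ‖gradF p‖, mul_nonneg ht (sq_nonneg ‖gradF p‖)]

theorem grad_eq_zero_of_forall_le (hF : D.HasGradHessBounds F gradF α β) {p : M}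
    (hp : ∀ y, F p ≤ F y) : gradF p = 0 := by
  have hloc : IsLocalMin (fun s : ℝ => F (D.exp p (s • gradF p))) 0 :=
    Eventually.of_forall fun s => by simpa [D.exp_zero] using hp (D.exp p (s • gradF p))
  have h := hloc.deriv_eq_zero
  rwa [hF.deriv_eq_inner p _ (hF.grad_mem p), real_inner_self_eq_norm_sq, sq_eq_zero_iff,
    norm_eq_zero] at h

theorem mul_dist_sq_le_sub_of_forall_le (hF : D.HasGradHessBounds F gradF α β) {p : M}
    (hp : ∀ y, F p ≤ F y) (y : M) : α / 2 * dist y p ^ 2 ≤ F y - F p := by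
  have h := hF.quadratic_lower_bound_dist p y
  rw [hF.grad_eq_zero_of_forall_le hp, norm_zero, dist_comm] at h
  linarith

theorem eq_of_forall_le (hF : D.HasGradHessBounds F gradF α β) (hα : 0 < α) {p q : M}
    (hp : ∀ y, F p ≤ F y) (hq : ∀ y, F q ≤ F y) : q = p := by
  have h := hF.mul_dist_sq_le_sub_of_forall_le hp q
  have : dist q p ^ 2 ≤ 0 := by nlinarith [hq p]
  exact dist_eq_zero.1 ((sq_nonpos_iff _).1 this)

section GradientDescent

variable {t : ℝ} {x : ℕ → M}

theorem sub_iInf_le_mul_pow (hF : D.HasGradHessBounds F gradF α β) (hα : 0 < α) (hαβ : α ≤ β)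
    (ht : 0 ≤ t) (htβ : t * β ≤ 1) (hx : D.IsGradientDescent gradF t x) (k : ℕ) :
    F (x k) - ⨅ y, F y ≤ (F (x 0) - ⨅ y, F y) * (1 - t * α) ^ k := by
  induction k with
  | zero => simp
  | succ k ih =>
    have hdesc := hF.apply_exp_neg_smul_grad_le ht htβ (x k)
    rw [← hx k] at hdesc
    have hPL := hF.sub_iInf_le_sq_norm_grad_div hα (x k)
    rw [le_div_iff₀ (by positivity)] at hPL
    have htα : t * α ≤ 1 := (mul_le_mul_of_nonneg_left hαβ ht).trans htβ
    calc F (x (k + 1)) - ⨅ y, F y ≤ (1 - t * α) * (F (x k) - ⨅ y, F y) := by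
          nlinarith [mul_le_mul_of_nonneg_left hPL ht]
      _ ≤ (1 - t * α) * ((F (x 0) - ⨅ y, F y) * (1 - t * α) ^ k) := by gcongr
      _ = (F (x 0) - ⨅ y, F y) * (1 - t * α) ^ (k + 1) := by ring

theorem mul_norm_grad_le (hF : D.HasGradHessBounds F gradF α β) (hα : 0 < α) (hαβ : α ≤ β)
    (ht : 0 ≤ t) (htβ : t * β ≤ 1) (hx : D.IsGradientDescent gradF t x) (k : ℕ) :
    t * ‖gradF (x k)‖ ≤ √(2 * t * (F (x 0) - ⨅ y, F y)) * √(1 - t * α) ^ k := by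
  have hdesc := hF.apply_exp_neg_smul_grad_le ht htβ (x k)
  rw [← hx k] at hdesc
  have hinf := ciInf_le (hF.bddBelow_range hα)
  have htα : t * α ≤ 1 := (mul_le_mul_of_nonneg_left hαβ ht).trans htβ
  refine le_sqrt_mul_sqrt_pow (by positivity) ?_ (by linarith) k ?_
  · nlinarith [hinf (x 0)]
  calc (t * ‖gradF (x k)‖) ^ 2 = 2 * t * (t / 2 * ‖gradF (x k)‖ ^ 2) := by ring
    _ ≤ 2 * t * (F (x k) - ⨅ y, F y) := by gcongr; linarith [hinf (x (k + 1))]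
    _ ≤ 2 * t * ((F (x 0) - ⨅ y, F y) * (1 - t * α) ^ k) := by
        gcongr; exact hF.sub_iInf_le_mul_pow hα hαβ ht htβ hx k
    _ = 2 * t * (F (x 0) - ⨅ y, F y) * (1 - t * α) ^ k := by ring

theorem cauchySeq (hF : D.HasGradHessBounds F gradF α β) (hα : 0 < α) (hαβ : α ≤ β)
    (ht : 0 < t) (htβ : t * β ≤ 1) (hx : D.IsGradientDescent gradF t x) : CauchySeq x := by
  refine cauchySeq_of_le_geometric (√(1 - t * α)) (√(2 * t * (F (x 0) - ⨅ y, F y))) ?_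
    fun k => ?_
  · rw [Real.sqrt_lt' one_pos]
    nlinarith
  · rw [hx k]
    refine (D.dist_exp_le _ _ (neg_mem (Submodule.smul_mem _ t (hF.grad_mem (x k))))).trans ?_
    rw [norm_neg, norm_smul, Real.norm_of_nonneg ht.le]
    exact hF.mul_norm_grad_le hα hαβ ht.le htβ hx k

theorem forall_le_of_tendsto (hF : D.HasGradHessBounds F gradF α β) (hα : 0 < α) (hαβ : α ≤ β)
    (ht : 0 < t) (htβ : t * β ≤ 1) (hx : D.IsGradientDescent gradF t x) {xs : M}
    (hxs : Tendsto x atTop (𝓝 xs)) (y : M) : F xs ≤ F y := by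
  have htα : t * α ≤ 1 := (mul_le_mul_of_nonneg_left hαβ ht.le).trans htβ
  have hpow : ∀ {r : ℝ}, 0 ≤ r → r < 1 → ∀ C : ℝ, Tendsto (fun k => C * r ^ k) atTop (𝓝 0) :=
    fun h0 h1 C => by simpa using (tendsto_pow_atTop_nhds_zero_of_lt_one h0 h1).const_mul C
  have hFx : Tendsto (fun k => F (x k)) atTop (𝓝 (⨅ y, F y)) := by
    have h := squeeze_zero (fun k => sub_nonneg.2 (ciInf_le (hF.bddBelow_range hα) (x k)))
      (hF.sub_iInf_le_mul_pow hα hαβ ht.le htβ hx) (hpow (by linarith) (by nlinarith) _)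
    simpa using h.add_const (⨅ y, F y)
  have hgrad : Tendsto (fun k => ‖gradF (x k)‖) atTop (𝓝 0) := by
    have h := squeeze_zero (fun k => by positivity) (hF.mul_norm_grad_le hα hαβ ht.le htβ hx)
      (hpow (Real.sqrt_nonneg _) ((Real.sqrt_lt' one_pos).2 (by nlinarith)) _)
    simpa [ht.ne'] using h.const_mul t⁻¹
  have hdist : Tendsto (fun k => dist (x k) xs) atTop (𝓝 0) := tendsto_iff_dist_tendsto_zero.1 hxs
  have hupper : Tendsto (fun k => F (x k) + ‖gradF (x k)‖ * dist (x k) xs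
      + β / 2 * dist (x k) xs ^ 2) atTop (𝓝 (⨅ y, F y)) := by
    simpa using (hFx.add (hgrad.mul hdist)).add ((hdist.pow 2).const_mul (β / 2))
  exact (ge_of_tendsto' hupper fun k => hF.quadratic_upper_bound_dist (x k) xs).trans
    (ciInf_le (hF.bddBelow_range hα) y)

end GradientDescent

end HasGradHessBounds

end RiemannianData

/-- Riemannian gradient descent with fixed stepsize: if `F : M → ℝ` is
`C²` with `α‖v‖² ≤ Hess F(v,v) ≤ β‖v‖²` for all tangent vectors (the Hessian on `(v,v)`
being the second derivative of `F` along geodesics), `0 < α ≤ β`, then `F` has a unique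
minimizer `x*`, and for any stepsize `t ∈ (0, 1/β]` the gradient descent iterates satisfy
`d(x_k, x*) ≤ c qᵏ` with `c = √((2/α)(F(x₀) - F(x*)))` and `q = √(1 - (t/2)α(1 + α/β))`. -/
theorem stmt9 {M V : Type*} [MetricSpace M] [CompleteSpace M]
    [NormedAddCommGroup V] [InnerProductSpace ℝ V]
    (D : RiemannianData M V) (F : M → ℝ)
    (hC2 : ∀ x : M, ∀ v ∈ D.tangent x, ContDiff ℝ 2 (fun s : ℝ => F (D.exp x (s • v))))
    (gradF : M → V) (hgrad_mem : ∀ x, gradF x ∈ D.tangent x)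
    (hgrad : ∀ x : M, ∀ v ∈ D.tangent x,
      deriv (fun s : ℝ => F (D.exp x (s • v))) 0 = ⟪gradF x, v⟫)
    (α β : ℝ) (hα : 0 < α) (hαβ : α ≤ β)
    (hHess : ∀ x : M, ∀ v ∈ D.tangent x, ∀ t : ℝ,
      α * ‖v‖ ^ 2 ≤ deriv (deriv (fun s : ℝ => F (D.exp x (s • v)))) t ∧
      deriv (deriv (fun s : ℝ => F (D.exp x (s • v)))) t ≤ β * ‖v‖ ^ 2)
    (t : ℝ) (ht : 0 < t) (ht' : t ≤ 1 / β)
    (x : ℕ → M) (hiter : ∀ k, x (k + 1) = D.exp (x k) (-(t • gradF (x k)))) :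
    ∃ xstar : M, (∀ y, F xstar ≤ F y) ∧ (∀ y, (∀ z, F y ≤ F z) → y = xstar) ∧
      ∀ k : ℕ, dist (x k) xstar
        ≤ Real.sqrt ((2 / α) * (F (x 0) - F xstar))
          * (Real.sqrt (1 - (t / 2) * α * (1 + α / β))) ^ k := by
  have hF : D.HasGradHessBounds F gradF α β := ⟨hC2, hgrad_mem, hgrad, hHess⟩
  have hβ : 0 < β := hα.trans_le hαβ
  have htβ : t * β ≤ 1 := by rwa [le_div_iff₀ hβ] at ht'
  obtain ⟨xs, hxs⟩ := cauchySeq_tendsto_of_complete (hF.cauchySeq hα hαβ ht htβ hiter)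
  have hmin := hF.forall_le_of_tendsto hα hαβ ht htβ hiter hxs
  refine ⟨xs, hmin, fun y hy => hF.eq_of_forall_le hα hmin hy, fun k => ?_⟩
  have : Nonempty M := ⟨xs⟩
  have hinf : ⨅ y, F y = F xs := le_antisymm (ciInf_le (hF.bddBelow_range hα) xs) (le_ciInf hmin)
  have hrate := hF.sub_iInf_le_mul_pow hα hαβ ht.le htβ hiter k
  rw [hinf] at hrate
  have hq : 1 - t * α ≤ 1 - t / 2 * α * (1 + α / β) := by
    have : α / β ≤ 1 := (div_le_one hβ).2 hαβ
    nlinarith [mul_pos ht hα]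
  have htα : t * α ≤ 1 := (mul_le_mul_of_nonneg_left hαβ ht.le).trans htβ
  have hgap : 0 ≤ 2 / α * (F (x 0) - F xs) := mul_nonneg (by positivity) (sub_nonneg.2 (hmin _))
  refine le_sqrt_mul_sqrt_pow dist_nonneg hgap (by linarith) k ?_
  calc dist (x k) xs ^ 2 ≤ 2 / α * (F (x k) - F xs) := by
        have := hF.mul_dist_sq_le_sub_of_forall_le hmin (x k)
        rw [div_mul_eq_mul_div, le_div_iff₀ hα]
        linarith
    _ ≤ 2 / α * ((F (x 0) - F xs) * (1 - t * α) ^ k) := by gcongr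
    _ ≤ 2 / α * (F (x 0) - F xs) * (1 - t / 2 * α * (1 + α / β)) ^ k := by
        rw [← mul_assoc]
        gcongr
end

section
/- Let M be a complete Riemannian manifold and F : M → ℝ a C² function with α‖v‖² ≤ Hess F(v,v) ≤ β‖v‖² for all v, with 0 < α ≤ β, and unique minimizer x*. Then for every x ∈ M: ‖grad F(x)‖² ≥ α(1 + α/β)(F(x) − F(x*)). -/
open scoped RealInnerProductSpace

theorem add_deriv_mul_add_le_of_le_deriv2 {f : ℝ → ℝ} (hf : ContDiff ℝ 2 f) {c : ℝ}
    (hc : ∀ t, c ≤ deriv^[2] f t) {x y : ℝ} (hxy : x ≤ y) :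
    f x + deriv f x * (y - x) + c / 2 * (y - x) ^ 2 ≤ f y := by
  rcases hxy.eq_or_lt with rfl | hxy
  · simp
  -- `g` is convex with `g' x = f' x`, so it lies above its tangent line at `x`.
  set g : ℝ → ℝ := fun t => f t - c / 2 * (t - x) ^ 2
  have hf' : Differentiable ℝ f := hf.differentiable (by norm_num)
  have hf'' : Differentiable ℝ (deriv f) :=
    (hf.iterate_deriv' 1 1).differentiable (by norm_num)
  have hg' : ∀ t, HasDerivAt g (deriv f t - c * (t - x)) t := fun t => by
    refine ((hf' t).hasDerivAt.sub
      ((((hasDerivAt_id t).sub_const x).pow 2).const_mul (c / 2))).congr_deriv ?_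
    simp only [id, Nat.cast_ofNat, mul_one]; ring
  have hg'' : ∀ t, HasDerivAt (deriv g) (deriv^[2] f t - c) t := fun t => by
    rw [show deriv g = fun t => deriv f t - c * (t - x) from funext fun t => (hg' t).deriv]
    refine ((hf'' t).hasDerivAt.sub (((hasDerivAt_id t).sub_const x).const_mul c)).congr_deriv ?_
    simp [Function.iterate_succ_apply']
  have hconv : ConvexOn ℝ Set.univ g :=
    convexOn_univ_of_deriv2_nonneg (fun t => (hg' t).differentiableAt)
      (fun t => (hg'' t).differentiableAt)
      (fun t => by simpa [(hg'' t).deriv] using hc t)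
  have := hconv.deriv_le_slope (Set.mem_univ x) (Set.mem_univ y) hxy (hg' x).differentiableAt
  rw [(hg' x).deriv, slope_def_field, le_div_iff₀ (sub_pos.2 hxy)] at this
  simp only [g, sub_self, mul_zero, sub_zero] at this
  nlinarith

theorem neg_inner_sub_le_norm_sq_div {V : Type*} [NormedAddCommGroup V] [InnerProductSpace ℝ V]
    {α : ℝ} (hα : 0 < α) (g v : V) :
    -⟪g, v⟫ - α / 2 * ‖v‖ ^ 2 ≤ ‖g‖ ^ 2 / (2 * α) := by
  have h : 0 ≤ ‖g‖ ^ 2 + 2 * α * ⟪g, v⟫ + α ^ 2 * ‖v‖ ^ 2 := by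
    have := norm_add_sq_real g (α • v)
    rw [real_inner_smul_right, norm_smul, Real.norm_of_nonneg hα.le] at this
    nlinarith [sq_nonneg ‖g + α • v‖]
  rw [le_div_iff₀ (by positivity)]
  nlinarith

theorem RiemannianData.two_mul_sub_le_norm_grad_sq {M V : Type*} [MetricSpace M]
    [NormedAddCommGroup V] [InnerProductSpace ℝ V]
    (D : RiemannianData M V) (F : M → ℝ)
    (hC2 : ∀ x : M, ∀ v ∈ D.tangent x, ContDiff ℝ 2 (fun s : ℝ => F (D.exp x (s • v))))
    (gradF : M → V)
    (hgrad : ∀ x : M, ∀ v ∈ D.tangent x,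
      deriv (fun s : ℝ => F (D.exp x (s • v))) 0 = ⟪gradF x, v⟫)
    {α : ℝ} (hα : 0 < α)
    (hHess : ∀ x : M, ∀ v ∈ D.tangent x, ∀ t : ℝ,
      α * ‖v‖ ^ 2 ≤ deriv (deriv (fun s : ℝ => F (D.exp x (s • v)))) t)
    (x y : M) :
    2 * α * (F x - F y) ≤ ‖gradF x‖ ^ 2 := by
  obtain ⟨v, hv, hexp, -⟩ := D.minimizing x y
  have hquad : F x + ⟪gradF x, v⟫ + α * ‖v‖ ^ 2 / 2 ≤ F y := by
    simpa [D.exp_zero, hexp, hgrad x v hv] using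
      add_deriv_mul_add_le_of_le_deriv2 (hC2 x v hv) (hHess x v hv) zero_le_one
  have hdual := neg_inner_sub_le_norm_sq_div hα (gradF x) v
  rw [le_div_iff₀ (by positivity)] at hdual
  nlinarith

theorem stmt11_general {M V : Type*} [MetricSpace M]
    [NormedAddCommGroup V] [InnerProductSpace ℝ V]
    (D : RiemannianData M V) (F : M → ℝ)
    (hC2 : ∀ x : M, ∀ v ∈ D.tangent x, ContDiff ℝ 2 (fun s : ℝ => F (D.exp x (s • v))))
    (gradF : M → V)
    (hgrad : ∀ x : M, ∀ v ∈ D.tangent x,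
      deriv (fun s : ℝ => F (D.exp x (s • v))) 0 = ⟪gradF x, v⟫)
    (α β : ℝ) (hα : 0 < α) (hαβ : α ≤ β)
    (hHess : ∀ x : M, ∀ v ∈ D.tangent x, ∀ t : ℝ,
      α * ‖v‖ ^ 2 ≤ deriv (deriv (fun s : ℝ => F (D.exp x (s • v)))) t ∧
      deriv (deriv (fun s : ℝ => F (D.exp x (s • v)))) t ≤ β * ‖v‖ ^ 2)
    (xstar : M) (hmin : ∀ y, F xstar ≤ F y) :
    ∀ x : M, ‖gradF x‖ ^ 2 ≥ α * (1 + α / β) * (F x - F xstar) := by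
  intro x
  have hPL := D.two_mul_sub_le_norm_grad_sq F hC2 gradF hgrad hα
    (fun x v hv t => (hHess x v hv t).1) x xstar
  have hβ : 0 < β := hα.trans_le hαβ
  have hconst : α * (1 + α / β) ≤ 2 * α := by
    nlinarith [(div_le_one hβ).mpr hαβ]
  calc α * (1 + α / β) * (F x - F xstar) ≤ 2 * α * (F x - F xstar) :=
        mul_le_mul_of_nonneg_right hconst (sub_nonneg.mpr (hmin x))
    _ ≤ ‖gradF x‖ ^ 2 := hPL

/-- Riemannian Polyak–Łojasiewicz inequality: under the two-sided
Hessian bound with `0 < α ≤ β` and unique minimizer `x*`, one has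
`‖grad F(x)‖² ≥ α(1 + α/β)(F(x) - F(x*))` for every `x`. -/
theorem stmt11 {M V : Type*} [MetricSpace M] [CompleteSpace M]
    [NormedAddCommGroup V] [InnerProductSpace ℝ V]
    (D : RiemannianData M V) (F : M → ℝ)
    (hC2 : ∀ x : M, ∀ v ∈ D.tangent x, ContDiff ℝ 2 (fun s : ℝ => F (D.exp x (s • v))))
    (gradF : M → V) (hgrad_mem : ∀ x, gradF x ∈ D.tangent x)
    (hgrad : ∀ x : M, ∀ v ∈ D.tangent x,
      deriv (fun s : ℝ => F (D.exp x (s • v))) 0 = ⟪gradF x, v⟫)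
    (α β : ℝ) (hα : 0 < α) (hαβ : α ≤ β)
    (hHess : ∀ x : M, ∀ v ∈ D.tangent x, ∀ t : ℝ,
      α * ‖v‖ ^ 2 ≤ deriv (deriv (fun s : ℝ => F (D.exp x (s • v)))) t ∧
      deriv (deriv (fun s : ℝ => F (D.exp x (s • v)))) t ≤ β * ‖v‖ ^ 2)
    (xstar : M) (hmin : ∀ y, F xstar ≤ F y)
    (huniq : ∀ y, (∀ z, F y ≤ F z) → y = xstar) :
    ∀ x : M, ‖gradF x‖ ^ 2 ≥ α * (1 + α / β) * (F x - F xstar) :=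
  stmt11_general D F hC2 gradF hgrad α β hα hαβ hHess xstar hmin
end

section
/- Let f : ℝ^m → N be an L-Lipschitz map into a Hadamard manifold N, and for r > 0 define B_r f(x) as the Riemannian center of mass of f restricted to the ball B(x,r) with normalized Lebesgue measure. Then B_r f is L-Lipschitz. -/
open MeasureTheory
open scoped RealInnerProductSpace

/-- The data of a Hadamard manifold `M` needed here: the inverse exponential maps
`log p : M → T_p M ⊆ V` into an ambient Hilbert space, which are norm-preserving on
radial lines, distance-nonincreasing (the CAT(0) property), and satisfy the strong
monotonicity inequality expressing the 1-strong convexity of `½ d(·,y)²`. -/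
structure HadamardData (M : Type*) (V : Type*) [MetricSpace M]
    [NormedAddCommGroup V] [InnerProductSpace ℝ V] where
  /-- the inverse exponential map `log p q = exp_p⁻¹ q` -/
  log : M → M → V
  norm_log : ∀ p q, ‖log p q‖ = dist p q
  /-- `exp_p⁻¹` is distance-nonincreasing (nonpositive curvature) -/
  nonexpansive : ∀ p y z, ‖log p y - log p z‖ ≤ dist y z
  /-- strong monotonicity: `d(p,q)² ≤ ⟪exp_p⁻¹ y, exp_p⁻¹ q⟫ + ⟪exp_q⁻¹ y, exp_q⁻¹ p⟫` -/
  strong_convexity : ∀ p q y, dist p q ^ 2 ≤ ⟪log p y, log p q⟫ + ⟪log q y, log q p⟫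

/-!
Write `p = B_r f(x)`, `q = B_r f(y)` and `c = y - x`; after translating, `q` is the center of mass
of `u ↦ f(u + c)` over the same ball `B(x,r)` as `p` is of `f`. Strong monotonicity at `f u`,
followed by moving `f u` to `f (u + c)` inside the 1-Lipschitz map `exp_q⁻¹`, gives
`d(p,q)² ≤ ⟪exp_p⁻¹ f(u), exp_p⁻¹ q⟫ + ⟪exp_q⁻¹ f(u + c), exp_q⁻¹ p⟫ + L |c| d(p,q)`.
Averaging over the ball kills both inner products, so `d(p,q)² ≤ L |x - y| d(p,q)`.
-/

theorem integral_inner_const {α V : Type*} [MeasurableSpace α] {μ : Measure α}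
    [NormedAddCommGroup V] [InnerProductSpace ℝ V] [CompleteSpace V]
    {g : α → V} (hg : Integrable g μ) (c : V) : ∫ u, ⟪g u, c⟫ ∂μ = ⟪∫ u, g u ∂μ, c⟫ := by
  simpa only [real_inner_comm c] using integral_inner hg c

theorem Continuous.integrableOn_ball {X E : Type*} [MetricSpace X] [ProperSpace X]
    [MeasurableSpace X] [OpensMeasurableSpace X] {μ : Measure X} [IsFiniteMeasureOnCompacts μ]
    [NormedAddCommGroup E] {g : X → E} (hg : Continuous g) (x : X) (r : ℝ) :
    IntegrableOn g (Metric.ball x r) μ :=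
  (hg.continuousOn.integrableOn_compact (isCompact_closedBall x r)).mono_set
    Metric.ball_subset_closedBall

theorem setIntegral_ball_comp_add_right {E F : Type*} [NormedAddCommGroup E] [MeasurableSpace E]
    [BorelSpace E] (μ : Measure E) [μ.IsAddRightInvariant] [NormedAddCommGroup F]
    [NormedSpace ℝ F] (g : E → F) (x c : E) (r : ℝ) :
    ∫ u in Metric.ball x r, g (u + c) ∂μ = ∫ v in Metric.ball (x + c) r, g v ∂μ := by
  simpa using (measurePreserving_add_right μ c).setIntegral_preimage_emb
    (measurableEmbedding_addRight c) g (Metric.ball (x + c) r)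

namespace HadamardData

variable {M V : Type*} [MetricSpace M] [NormedAddCommGroup V] [InnerProductSpace ℝ V]

theorem lipschitzWith_log (H : HadamardData M V) (p : M) : LipschitzWith 1 (H.log p) :=
  LipschitzWith.of_dist_le_mul fun y z => by
    simpa [dist_eq_norm] using H.nonexpansive p y z

theorem dist_sq_le_inner_log_add_inner_log (H : HadamardData M V) (p q y z : M) :
    dist p q ^ 2 ≤ ⟪H.log p y, H.log p q⟫ + ⟪H.log q z, H.log q p⟫ + dist y z * dist p q := by
  have hmove : ⟪H.log q y - H.log q z, H.log q p⟫ ≤ dist y z * dist p q :=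
    calc ⟪H.log q y - H.log q z, H.log q p⟫
        ≤ ‖H.log q y - H.log q z‖ * ‖H.log q p‖ := real_inner_le_norm _ _
      _ ≤ dist y z * dist p q := by
        rw [H.norm_log, dist_comm q p]
        gcongr
        exact H.nonexpansive q y z
  rw [inner_sub_left] at hmove
  linarith [H.strong_convexity p q y]

/-- The Riemannian center of mass, through its first-order characterization, which determines it
uniquely in a Hadamard manifold. -/
def IsCenterOfMass (H : HadamardData M V) {α : Type*} [MeasurableSpace α] (μ : Measure α)
    (F : α → M) (p : M) : Prop :=
  ∫ u, H.log p (F u) ∂μ = 0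

theorem IsCenterOfMass.dist_le [CompleteSpace V] {H : HadamardData M V}
    {α : Type*} [MeasurableSpace α] {μ : Measure α} [IsFiniteMeasure μ] [NeZero μ]
    {F G : α → M} {p q : M} {δ : ℝ} (hp : H.IsCenterOfMass μ F p) (hq : H.IsCenterOfMass μ G q)
    (hF : Integrable (fun u => H.log p (F u)) μ) (hG : Integrable (fun u => H.log q (G u)) μ)
    (hFG : ∀ u, dist (F u) (G u) ≤ δ) :
    dist p q ≤ δ := by
  rw [IsCenterOfMass] at hp hq
  set D := dist p q
  have hpointwise : ∀ u, D ^ 2 ≤ ⟪H.log p (F u), H.log p q⟫ + ⟪H.log q (G u), H.log q p⟫ + δ * D :=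
    fun u => (H.dist_sq_le_inner_log_add_inner_log p q (F u) (G u)).trans
      (by gcongr; exact hFG u)
  have hFp : Integrable (fun u => ⟪H.log p (F u), H.log p q⟫) μ := hF.inner_const _
  have hGq : Integrable (fun u => ⟪H.log q (G u), H.log q p⟫) μ := hG.inner_const _
  have hFGpq : Integrable (fun u => ⟪H.log p (F u), H.log p q⟫ + ⟪H.log q (G u), H.log q p⟫) μ :=
    hFp.add hGq
  have hmean : μ.real Set.univ * D ^ 2 ≤ μ.real Set.univ * (δ * D) := by
    have := integral_mono (integrable_const (D ^ 2)) (hFGpq.add (integrable_const (δ * D)))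
      hpointwise
    dsimp only [Pi.add_apply] at this
    rwa [integral_add hFGpq (integrable_const _), integral_add hFp hGq, integral_inner_const hF,
      integral_inner_const hG, hp, hq, inner_zero_left, inner_zero_left, zero_add,
      zero_add, integral_const, integral_const, smul_eq_mul, smul_eq_mul] at this
  have hsq : D ^ 2 ≤ δ * D := le_of_mul_le_mul_left hmean measureReal_univ_pos
  obtain ⟨u⟩ := Measure.nonempty_of_neZero μ
  have hδ : 0 ≤ δ := dist_nonneg.trans (hFG u)
  nlinarith [dist_nonneg (x := p) (y := q)]

end HadamardData

/-- if `f : ℝᵐ → N` is `L`-Lipschitz into a Hadamard manifold and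
`B_r f (x)` is the Riemannian center of mass of `f` on the ball `B(x,r)` with normalized
Lebesgue measure — characterized by `∫_{B(x,r)} exp_{B_r f(x)}⁻¹ (f u) du = 0` — then
`B_r f` is `L`-Lipschitz. -/
theorem stmt15 {N V : Type*} [MetricSpace N]
    [NormedAddCommGroup V] [InnerProductSpace ℝ V] [CompleteSpace V]
    (H : HadamardData N V) (m : ℕ) (L : NNReal)
    (f : EuclideanSpace ℝ (Fin m) → N) (hf : LipschitzWith L f)
    (r : ℝ) (hr : 0 < r)
    (Brf : EuclideanSpace ℝ (Fin m) → N)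
    (hBrf : ∀ x, (∫ u in Metric.ball x r, H.log (Brf x) (f u)) = 0) :
    LipschitzWith L Brf := by
  refine LipschitzWith.of_dist_le_mul fun x y => ?_
  have : IsFiniteMeasure (volume.restrict (Metric.ball x r)) :=
    isFiniteMeasure_restrict.2 measure_ball_lt_top.ne
  have : NeZero (volume.restrict (Metric.ball x r)) :=
    ⟨by simpa using (Metric.measure_ball_pos volume x hr).ne'⟩
  have hint : ∀ (p : N) (c : EuclideanSpace ℝ (Fin m)),
      Integrable (fun u => H.log p (f (u + c))) (volume.restrict (Metric.ball x r)) := fun p c =>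
    ((H.lipschitzWith_log p).continuous.comp
      (hf.continuous.comp (continuous_add_const c))).integrableOn_ball x r
  have hcenter_y : H.IsCenterOfMass (volume.restrict (Metric.ball x r))
      (fun u => f (u + (y - x))) (Brf y) := by
    rw [HadamardData.IsCenterOfMass,
      setIntegral_ball_comp_add_right volume (fun v => H.log (Brf y) (f v)), add_sub_cancel]
    exact hBrf y
  refine HadamardData.IsCenterOfMass.dist_le (hBrf x) hcenter_y
    (by simpa using hint (Brf x) 0) (hint (Brf y) (y - x)) fun u => ?_
  calc dist (f u) (f (u + (y - x))) ≤ L * dist u (u + (y - x)) := hf.dist_le_mul _ _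
    _ = L * dist x y := by rw [dist_self_add_right, dist_comm, dist_eq_norm]
end

section
/- In the hyperboloid model ℋ = {x ∈ ℝ^{n,1} : ⟨x,x⟩ = −1, x_{n+1} > 0} of hyperbolic n-space, let p₁,…,p_k ∈ ℋ with weights w₁,…,w_k > 0 summing to 1, and let p = Σ w_i p_i be their Euclidean barycenter in Minkowski space ℝ^{n,1}. Then ⟨p,p⟩ < 0, and the radial projection q = p / sqrt(−⟨p,p⟩) ∈ ℋ satisfies Σ_i w_i sinhc(d(q,p_i)) exp_q^{-1}(p_i) = 0; i.e., q is the cosh-center of mass of the weighted points. -/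
noncomputable section

namespace Stmt16Aux

variable {n : ℕ}

lemma mink_comm (x y : Fin (n+1) → ℝ) : mink n x y = mink n y x := by
  unfold mink
  congr 1
  · exact Finset.sum_congr rfl fun i _ => mul_comm _ _
  · exact mul_comm _ _

lemma mink_smul_left (c : ℝ) (x y : Fin (n+1) → ℝ) :
    mink n (c • x) y = c * mink n x y := by
  unfold mink
  rw [mul_sub, Finset.mul_sum]
  congr 1
  · exact Finset.sum_congr rfl fun i _ => by simp [mul_assoc]
  · simp [mul_assoc]

lemma mink_sum_left {k : ℕ} (f : Fin k → (Fin (n+1) → ℝ)) (y : Fin (n+1) → ℝ) :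
    mink n (∑ i, f i) y = ∑ i, mink n (f i) y := by
  unfold mink
  simp only [Finset.sum_apply, Finset.sum_mul, Finset.sum_sub_distrib]
  rw [Finset.sum_comm]

lemma mink_wsum_left {k : ℕ} (w : Fin k → ℝ) (f : Fin k → (Fin (n+1) → ℝ))
    (y : Fin (n+1) → ℝ) :
    mink n (∑ i, w i • f i) y = ∑ i, w i * mink n (f i) y := by
  rw [mink_sum_left]
  exact Finset.sum_congr rfl fun i _ => mink_smul_left _ _ _

/-- Reverse Cauchy-Schwarz: two points on the hyperboloid have `⟨x,y⟩ ≤ -1`. -/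
lemma mink_le_neg_one {x y : Fin (n+1) → ℝ} (hx : IsHyp n x) (hy : IsHyp n y) :
    mink n x y ≤ -1 := by
  obtain ⟨hx1, hx2⟩ := hx
  obtain ⟨hy1, hy2⟩ := hy
  unfold mink at *
  set S := ∑ i : Fin n, x i.castSucc * y i.castSucc with hS
  set L := x (Fin.last n)
  set M := y (Fin.last n)
  have hA : ∑ i : Fin n, x i.castSucc ^ 2 = L ^ 2 - 1 := by
    have := hx1
    simp only [← sq] at this
    linarith
  have hB : ∑ i : Fin n, y i.castSucc ^ 2 = M ^ 2 - 1 := by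
    have := hy1
    simp only [← sq] at this
    linarith
  have hCS : S ^ 2 ≤ (L ^ 2 - 1) * (M ^ 2 - 1) := by
    rw [← hA, ← hB]
    exact Finset.sum_mul_sq_le_sq_mul_sq _ _ _
  have hxnn : (0:ℝ) ≤ ∑ i : Fin n, x i.castSucc ^ 2 :=
    Finset.sum_nonneg fun i _ => sq_nonneg _
  have hynn : (0:ℝ) ≤ ∑ i : Fin n, y i.castSucc ^ 2 :=
    Finset.sum_nonneg fun i _ => sq_nonneg _
  have hL : 1 ≤ L := by nlinarith
  have hM : 1 ≤ M := by nlinarith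
  have hLM : (1:ℝ) ≤ L * M := by nlinarith
  nlinarith [sq_nonneg (L - M), hLM, hCS]

/-- Equality case: `⟨x,y⟩ = -1` forces `x = y`. -/
lemma eq_of_mink_eq_neg_one {x y : Fin (n+1) → ℝ} (hx : IsHyp n x) (hy : IsHyp n y)
    (h : mink n x y = -1) : x = y := by
  obtain ⟨hx1, hx2⟩ := hx
  obtain ⟨hy1, hy2⟩ := hy
  unfold mink at hx1 hy1 h
  set S := ∑ i : Fin n, x i.castSucc * y i.castSucc with hS
  set L := x (Fin.last n)
  set M := y (Fin.last n)
  have hA : ∑ i : Fin n, x i.castSucc ^ 2 = L ^ 2 - 1 := by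
    simp only [← sq] at hx1; linarith
  have hB : ∑ i : Fin n, y i.castSucc ^ 2 = M ^ 2 - 1 := by
    simp only [← sq] at hy1; linarith
  have hCS : S ^ 2 ≤ (L ^ 2 - 1) * (M ^ 2 - 1) := by
    rw [← hA, ← hB]
    exact Finset.sum_mul_sq_le_sq_mul_sq _ _ _
  have hSe : S = L * M - 1 := by linarith
  have hLM : L = M := by nlinarith [sq_nonneg (L - M)]
  have hdiff : ∑ i : Fin n, (x i.castSucc - y i.castSucc) ^ 2 = 0 := by
    have : ∀ i : Fin n, (x i.castSucc - y i.castSucc) ^ 2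
        = x i.castSucc ^ 2 + y i.castSucc ^ 2 - 2 * (x i.castSucc * y i.castSucc) := by
      intro i; ring
    rw [Finset.sum_congr rfl fun i _ => this i]
    simp only [Finset.sum_sub_distrib, Finset.sum_add_distrib, ← Finset.mul_sum]
    rw [hA, hB, ← hS, hSe, hLM]
    ring
  have hzero : ∀ i : Fin n, x i.castSucc - y i.castSucc = 0 := by
    intro i
    have := (Finset.sum_eq_zero_iff_of_nonneg
      (fun j (_ : j ∈ Finset.univ) => sq_nonneg (x j.castSucc - y j.castSucc))).mp hdiff
      i (Finset.mem_univ i)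
    exact pow_eq_zero_iff (by norm_num) |>.mp this
  funext j
  refine Fin.lastCases ?_ ?_ j
  · exact hLM
  · intro i; have := hzero i; linarith

lemma acosh_one : acosh 1 = 0 := by
  unfold acosh
  norm_num

lemma sinh_acosh {c : ℝ} (hc : 1 ≤ c) : Real.sinh (acosh c) = Real.sqrt (c ^ 2 - 1) := by
  unfold acosh
  have hs : Real.sqrt (c ^ 2 - 1) ^ 2 = c ^ 2 - 1 :=
    Real.sq_sqrt (by nlinarith)
  have hsnn : 0 ≤ Real.sqrt (c ^ 2 - 1) := Real.sqrt_nonneg _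
  have hpos : 0 < c + Real.sqrt (c ^ 2 - 1) := by linarith
  rw [Real.sinh_log hpos]
  have hinv : (c + Real.sqrt (c ^ 2 - 1))⁻¹ = c - Real.sqrt (c ^ 2 - 1) :=
    inv_eq_of_mul_eq_one_right (by nlinarith)
  rw [hinv]
  ring

lemma acosh_pos {c : ℝ} (hc : 1 < c) : 0 < acosh c := by
  unfold acosh
  apply Real.log_pos
  have : 0 < Real.sqrt (c ^ 2 - 1) := Real.sqrt_pos.mpr (by nlinarith)
  linarith

end Stmt16Aux

/-- in the hyperboloid model, the Euclidean (Minkowski) barycenter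
`p = Σ wᵢ pᵢ` has negative Minkowski square, its radial projection
`q = p / √(-⟨p,p⟩)` lies on the hyperboloid, and `q` satisfies the characterizing
equation `Σᵢ wᵢ sinhc(d(q,pᵢ)) exp_q⁻¹(pᵢ) = 0` of the cosh-center of mass. -/
theorem stmt16 (n k : ℕ) (p : Fin k → (Fin (n+1) → ℝ)) (w : Fin k → ℝ)
    (hp : ∀ i, IsHyp n (p i)) (hw : ∀ i, 0 < w i) (hsum : ∑ i, w i = 1) :
    mink n (∑ i, w i • p i) (∑ i, w i • p i) < 0 ∧
    IsHyp n ((Real.sqrt (-(mink n (∑ i, w i • p i) (∑ i, w i • p i))))⁻¹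
        • ∑ i, w i • p i) ∧
    ∑ i, w i • (sinhc (hdist n ((Real.sqrt (-(mink n (∑ i, w i • p i)
            (∑ i, w i • p i))))⁻¹ • ∑ i, w i • p i) (p i))
          • hlog n ((Real.sqrt (-(mink n (∑ i, w i • p i) (∑ i, w i • p i))))⁻¹
            • ∑ i, w i • p i) (p i))
      = 0 := by
  classical
  open Stmt16Aux in
  set P := ∑ i, w i • p i with hP
  have hk : Nonempty (Fin k) := by
    by_contra h
    rw [not_nonempty_iff] at h
    rw [Finset.sum_of_isEmpty] at hsum
    norm_num at hsum
  -- each pᵢ pairs with P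
  have key : ∀ i, mink n P (p i) ≤ -1 := by
    intro i
    rw [hP, Stmt16Aux.mink_wsum_left]
    calc ∑ j, w j * mink n (p j) (p i)
        ≤ ∑ j, w j * (-1) :=
          Finset.sum_le_sum fun j _ =>
            mul_le_mul_of_nonneg_left (Stmt16Aux.mink_le_neg_one (hp j) (hp i)) (hw j).le
      _ = -1 := by rw [← Finset.sum_mul, hsum]; ring
  have h1 : mink n P P ≤ -1 := by
    conv_lhs => rw [hP, Stmt16Aux.mink_wsum_left]
    have : ∀ i, w i * mink n (p i) P ≤ w i * (-1) := fun i =>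
      mul_le_mul_of_nonneg_left (by rw [Stmt16Aux.mink_comm]; exact key i) (hw i).le
    calc ∑ i, w i * mink n (p i) P ≤ ∑ i, w i * (-1) := Finset.sum_le_sum fun i _ => this i
      _ = -1 := by rw [← Finset.sum_mul, hsum]; ring
  have hPPneg : mink n P P < 0 := lt_of_le_of_lt h1 (by norm_num)
  set s := Real.sqrt (-(mink n P P)) with hs_def
  have hs2 : (0:ℝ) < -(mink n P P) := by linarith
  have hs : 0 < s := Real.sqrt_pos.mpr hs2
  have hss : s * s = -(mink n P P) := Real.mul_self_sqrt hs2.le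
  have hmPP : mink n P P = -(s * s) := by linarith
  set q := s⁻¹ • P with hq
  have hqq : mink n q q = -1 := by
    rw [hq, Stmt16Aux.mink_smul_left, Stmt16Aux.mink_comm, Stmt16Aux.mink_smul_left,
      Stmt16Aux.mink_comm, hmPP]
    field_simp
  have hPlast : 0 < P (Fin.last n) := by
    rw [hP]
    rw [Finset.sum_apply]
    apply Finset.sum_pos
    · intro i _
      simpa using mul_pos (hw i) (hp i).2
    · exact Finset.univ_nonempty
  have hq_hyp : IsHyp n q := by
    refine ⟨hqq, ?_⟩
    rw [hq]
    simpa using mul_pos (inv_pos.mpr hs) hPlast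
  refine ⟨hPPneg, hq_hyp, ?_⟩
  -- termwise identity
  have term : ∀ i, sinhc (hdist n q (p i)) • hlog n q (p i)
      = p i + (mink n q (p i)) • q := by
    intro i
    have hm : mink n q (p i) ≤ -1 := Stmt16Aux.mink_le_neg_one hq_hyp (hp i)
    set c := -(mink n q (p i)) with hc
    have hc1 : 1 ≤ c := by rw [hc]; linarith
    have hd : hdist n q (p i) = acosh c := rfl
    rcases eq_or_lt_of_le hc1 with heq | hlt
    · -- c = 1: p i = q
      have hm1 : mink n q (p i) = -1 := by rw [hc] at heq; linarith
      have hpq : q = p i := Stmt16Aux.eq_of_mink_eq_neg_one hq_hyp (hp i) hm1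
      have hd0 : hdist n q (p i) = 0 := by rw [hd, ← heq, Stmt16Aux.acosh_one]
      rw [hd0, hm1]
      unfold hlog
      rw [hd0]
      rw [← hpq]
      simp
    · have hdpos : 0 < acosh c := Stmt16Aux.acosh_pos hlt
      have hsinh : Real.sinh (acosh c) = Real.sqrt (c ^ 2 - 1) := Stmt16Aux.sinh_acosh hc1
      have hsp : 0 < Real.sinh (acosh c) := by
        rw [hsinh]; exact Real.sqrt_pos.mpr (by nlinarith)
      have hv : p i + (mink n q (p i)) • q = p i + (mink n q (p i)) • q := rfl
      unfold hlog hdir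
      rw [hd]
      rw [sinhc, if_neg hdpos.ne']
      rw [smul_smul, smul_smul]
      have : Real.sinh (acosh c) / acosh c * acosh c * (Real.sinh (acosh c))⁻¹ = 1 := by
        field_simp
      rw [this, one_smul]
  calc ∑ i, w i • (sinhc (hdist n q (p i)) • hlog n q (p i))
      = ∑ i, (w i • p i + (w i * mink n q (p i)) • q) := by
        refine Finset.sum_congr rfl fun i _ => ?_
        rw [term i, smul_add, smul_smul]
    _ = P + (∑ i, w i * mink n q (p i)) • q := by
        rw [Finset.sum_add_distrib, ← hP, Finset.sum_smul]
    _ = 0 := by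
        have hqsum : ∑ i, w i * mink n q (p i) = mink n q P := by
          rw [Stmt16Aux.mink_comm, hP, Stmt16Aux.mink_wsum_left]
          exact Finset.sum_congr rfl fun i _ => by rw [Stmt16Aux.mink_comm]
        have hqP : mink n q P = -s := by
          rw [hq, Stmt16Aux.mink_smul_left, hmPP]
          field_simp
        rw [hqsum, hqP, hq, smul_smul]
        have : -s * s⁻¹ = -1 := by field_simp
        rw [this]
        simp
end
end
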